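/- The invariant ring K[x_1,…,x_n]^{B_n} is generated as a K-algebra by the n polynomials η_1(x_1^2,…,x_n^2), …, η_n(x_1^2,…,x_n^2), where η_k is the k-th elementary symmetric polynomial. That is, for every B_n-invariant p there exists h ∈ K[e_1,…,e_n] with h(η_1(x_1^2,…,x_n^2),…,η_n(x_1^2,…,x_n^2)) = p. -/
import Mathlib


open MvPolynomial

section Aux
open MvPolynomial Finsupp

variable {K : Type*} [Field K] {n : ℕ}

noncomputable def dbl (t : Fin n →₀ ℕ) : Fin n →₀ ℕ := t.mapRange (fun k => 2*k) (by simp)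
noncomputable def hlf (t : Fin n →₀ ℕ) : Fin n →₀ ℕ := t.mapRange (fun k => k/2) (by simp)

lemma dbl_apply (t : Fin n →₀ ℕ) (i : Fin n) : dbl t i = 2 * t i := rfl
lemma hlf_apply (t : Fin n →₀ ℕ) (i : Fin n) : hlf t i = t i / 2 := rfl

lemma hlf_dbl (t : Fin n →₀ ℕ) : hlf (dbl t) = t := by
  ext i; simp [hlf_apply, dbl_apply, Nat.mul_div_cancel_left _ (by norm_num : 0 < 2)]

lemma dbl_hlf {t : Fin n →₀ ℕ} (h : ∀ i, Even (t i)) : dbl (hlf t) = t := by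
  ext i; exact Nat.mul_div_cancel' ((h i).two_dvd) |>.symm ▸ rfl

lemma dbl_mapDomain (σ : Equiv.Perm (Fin n)) (t : Fin n →₀ ℕ) :
    Finsupp.mapDomain σ (dbl t) = dbl (Finsupp.mapDomain σ t) := by
  rw [← Finsupp.equivMapDomain_eq_mapDomain, ← Finsupp.equivMapDomain_eq_mapDomain]
  ext i
  simp [dbl_apply, Finsupp.equivMapDomain_apply]

lemma aeval_sq_monomial (t : Fin n →₀ ℕ) (c : K) :
    aeval (fun i => (X i : MvPolynomial (Fin n) K) ^ 2) (monomial t c) = monomial (dbl t) c := by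
  rw [aeval_monomial, monomial_eq, algebraMap_eq]
  congr 1
  rw [dbl, Finsupp.prod_mapRange_index (by simp)]
  exact Finsupp.prod_congr fun i _ => by rw [pow_mul]

lemma aeval_scale_monomial (ε : Fin n → K) (t : Fin n →₀ ℕ) (c : K) :
    aeval (fun j => C (ε j) * X j : Fin n → MvPolynomial (Fin n) K) (monomial t c)
      = monomial t (c * t.prod fun j k => ε j ^ k) := by
  rw [aeval_monomial, algebraMap_eq, monomial_eq, map_mul]
  simp only [Finsupp.prod, mul_pow, Finset.prod_mul_distrib, map_prod, map_pow]
  ring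

theorem Bn_invariant_generators_aux [CharZero K]
    (p : MvPolynomial (Fin n) K)
    (hinv : ∀ (σ : Equiv.Perm (Fin n)) (ε : Fin n → K), (∀ i, ε i = 1 ∨ ε i = -1) →
      aeval (fun i => C (ε i) * X (σ i)) p = p) :
    ∃ h : MvPolynomial (Fin n) K,
      aeval (fun k : Fin n =>
        aeval (fun i => (X i : MvPolynomial (Fin n) K) ^ 2)
          (esymm (Fin n) K ((k : ℕ) + 1))) h = p := by
  set F : Fin n → MvPolynomial (Fin n) K := fun i => X i ^ 2 with hF
  -- Step 1: all exponents are even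
  have heven : ∀ d ∈ p.support, ∀ i, Even (d i) := by
    intro d hd i
    by_contra hodd
    rw [Nat.not_even_iff_odd] at hodd
    set ε : Fin n → K := fun j => if j = i then -1 else 1 with hε
    have hinv1 := hinv 1 ε (fun j => by by_cases h : j = i <;> simp [hε, h])
    simp only [Equiv.Perm.coe_one, id_eq] at hinv1
    have hc := congrArg (coeff d) hinv1
    conv_lhs at hc => rw [p.as_sum, map_sum]
    simp only [aeval_scale_monomial] at hc
    rw [coeff_sum] at hc
    simp only [coeff_monomial] at hc
    rw [Finset.sum_ite_eq' p.support d _] at hc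
    rw [if_pos hd] at hc
    have hprod : (d.prod fun j k => ε j ^ k) = (-1 : K) ^ (d i) := by
      rw [Finsupp.prod]
      by_cases hi : i ∈ d.support
      · rw [Finset.prod_eq_single i (fun j _ hj => by simp [hε, hj]) (fun h => absurd hi h)]
        simp [hε]
      · rw [Finset.prod_eq_one (fun j hj => by
          have hji : j ≠ i := fun h => hi (h ▸ hj)
          simp [hε, hji])]
        rw [Finsupp.notMem_support_iff.mp hi, pow_zero]
    rw [hprod, hodd.neg_one_pow, mul_neg_one] at hc
    have h2 : (2 : K) * coeff d p = 0 := by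
      rw [two_mul]
      nth_rewrite 1 [← hc]
      ring
    have : coeff d p = 0 :=
      (mul_eq_zero.mp h2).resolve_left two_ne_zero
    exact (MvPolynomial.mem_support_iff.mp hd) this
  -- Step 2: build q
  set q : MvPolynomial (Fin n) K :=
    ∑ d ∈ p.support, monomial (hlf d) (coeff d p) with hq
  have haq : aeval F q = p := by
    rw [hq, map_sum]
    conv_rhs => rw [p.as_sum]
    refine Finset.sum_congr rfl fun d hd => ?_
    rw [aeval_sq_monomial, dbl_hlf (heven d hd)]
  have hcoeffq : ∀ e, coeff e q = coeff (dbl e) p := by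
    intro e
    rw [hq, coeff_sum]
    simp only [coeff_monomial]
    have : ∀ d ∈ p.support, (if hlf d = e then coeff d p else 0)
        = (if d = dbl e then coeff d p else 0) := by
      intro d hd
      congr 1
      simp only [eq_iff_iff]
      constructor
      · intro h; rw [← dbl_hlf (heven d hd), h]
      · intro h; rw [h, hlf_dbl]
    rw [Finset.sum_congr rfl this, Finset.sum_ite_eq' p.support (dbl e) _]
    by_cases hmem : dbl e ∈ p.support
    · rw [if_pos hmem]
    · rw [if_neg hmem, MvPolynomial.notMem_support_iff.mp hmem]
  -- rename invariance of p
  have hren : ∀ σ : Equiv.Perm (Fin n), rename σ p = p := by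
    intro σ
    have h1 := hinv σ 1 (fun _ => Or.inl rfl)
    have : (rename (σ : Fin n → Fin n) : MvPolynomial (Fin n) K →ₐ[K] _)
        = aeval (fun i => C (1:K) * X (σ i)) := by
      apply MvPolynomial.algHom_ext; intro i; simp
    rw [show (rename (σ : Fin n → Fin n)) p
        = (rename (σ : Fin n → Fin n) : MvPolynomial (Fin n) K →ₐ[K] _) p from rfl, this]
    exact h1
  -- Step 3: q symmetric
  have hsym : q.IsSymmetric := by
    intro σ
    apply MvPolynomial.ext
    intro e
    have he : Finsupp.mapDomain σ (Finsupp.mapDomain σ.symm e) = e := by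
      rw [← Finsupp.mapDomain_comp]
      simp [Finsupp.mapDomain_id]
    calc coeff e (rename σ q)
        = coeff (Finsupp.mapDomain σ (Finsupp.mapDomain σ.symm e)) (rename σ q) := by rw [he]
      _ = coeff (Finsupp.mapDomain σ.symm e) q := coeff_rename_mapDomain σ σ.injective q _
      _ = coeff (dbl (Finsupp.mapDomain σ.symm e)) p := hcoeffq _
      _ = coeff (Finsupp.mapDomain σ.symm (dbl e)) p := by rw [dbl_mapDomain]
      _ = coeff (dbl e) p := by
          conv_lhs => rw [← hren σ.symm]
          exact coeff_rename_mapDomain σ.symm σ.symm.injective p _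
      _ = coeff e q := (hcoeffq e).symm
  -- Step 4: fundamental theorem
  obtain ⟨h, hh⟩ := esymmAlgHom_fin_surjective (R := K) (le_refl n) ⟨q, hsym⟩
  have hhq : aeval (fun i : Fin n => esymm (Fin n) K ((i : ℕ) + 1)) h = q := by
    have := congrArg Subtype.val hh
    rwa [esymmAlgHom_apply] at this
  refine ⟨h, ?_⟩
  have hcomp : (aeval F).comp (aeval (fun i : Fin n => esymm (Fin n) K ((i : ℕ) + 1)))
      = aeval (fun k : Fin n => aeval F (esymm (Fin n) K ((k : ℕ) + 1))) := by
    apply MvPolynomial.algHom_ext; intro i; simp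
  calc aeval (fun k : Fin n => aeval F (esymm (Fin n) K ((k : ℕ) + 1))) h
      = (aeval F).comp (aeval (fun i : Fin n => esymm (Fin n) K ((i : ℕ) + 1))) h := by
        rw [hcomp]
    _ = aeval F (aeval (fun i : Fin n => esymm (Fin n) K ((i : ℕ) + 1)) h) := rfl
    _ = p := by rw [hhq, haq]

end Aux

/-- The invariant ring `K[x_1,…,x_n]^{B_n}` is generated by
`η_1(x_1^2,…,x_n^2), …, η_n(x_1^2,…,x_n^2)`: for every `B_n`-invariant `p` there is
`h ∈ K[e_1,…,e_n]` with `h(η_1(x²),…,η_n(x²)) = p`. -/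
theorem Bn_invariant_generators {K : Type*} [Field K] [CharZero K] (n : ℕ)
    (p : MvPolynomial (Fin n) K)
    (hinv : ∀ (σ : Equiv.Perm (Fin n)) (ε : Fin n → K), (∀ i, ε i = 1 ∨ ε i = -1) →
      aeval (fun i => C (ε i) * X (σ i)) p = p) :
    ∃ h : MvPolynomial (Fin n) K,
      aeval (fun k : Fin n =>
        aeval (fun i => (X i : MvPolynomial (Fin n) K) ^ 2)
          (esymm (Fin n) K ((k : ℕ) + 1))) h = p :=
  Bn_invariant_generators_aux p hinv
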